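/- arXiv:1611.03545 — 3 statements merged into one kernel-verified Lean document; each statement's English description precedes it below -/
import Mathlib

section
/- (Lemma 4.1.) Fix (i_0, …, i_T) ∈ {0,1}^{T+1}. In the IVR model, under consistency, sequential randomization (SR) and positivity (POS), one has, P-almost surely, E[ (∏_{j=0}^T W_j) · ∏_{j=0}^T 1{Z_j = i_j} / P(Z_j = i_j | G_j) | σ(X_0) ] = E[ ∏_{j=0}^T W_j(i_j) | σ(X_0) ]. -/
/-!
Write `s j = {Z_j = i_j}` and `B = ⋂ j, {W_j(i_j) = 1}`. Off `⋂ j, s j` the weight vanishes, and on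
it the observed treatments are the potential ones `W_j(i_j)`, so the integrand is
`1_B · ∏ j, 1_{s j} / P(s j | G_j)`. The factors are peeled off from the last one: the earlier
factors are `G_j`-measurable, so conditioning on `G_j` and using (SR) in the form
`P(s j ∩ B | G_j) = P(s j | G_j) · P(B | G_j)` cancels the `j`-th factor, and the tower property
returns to `σ(X_0) ≤ G_j`. The partial weights are integrable because `∫ 1_s · u = ∫ P(s | m) · u`
for every `m`-measurable `u ≥ 0`.
-/

open MeasureTheory ProbabilityTheory MeasurableSpace
open scoped ENNReal

theorem monotone_of_forall_eq_sup_biSup_lt {α : Type*} [CompleteLattice α] {n : ℕ}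
    {G : Fin n → α} {a : α} {f : ℕ → α} (hG : ∀ j, G j = a ⊔ ⨆ k, ⨆ _ : k < (j : ℕ), f k) :
    Monotone G := fun j j' hjj' => by
  rw [hG j, hG j']
  exact sup_le_sup_left (biSup_mono fun k hk => hk.trans_le hjj') _

theorem le_of_forall_eq_sup_biSup_lt {α : Type*} [CompleteLattice α] {n : ℕ}
    {G : Fin n → α} {a : α} {f : ℕ → α} (hG : ∀ j, G j = a ⊔ ⨆ k, ⨆ _ : k < (j : ℕ), f k)
    {j : Fin n} {k : ℕ} (hk : k < j) : f k ≤ G j :=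
  (hG j).ge.trans' (le_sup_of_le_right (le_iSup₂_of_le k hk le_rfl))

theorem prod_toNat_eq_indicator_iInter {Ω ι : Type*} [Fintype ι] (b : ι → Ω → Bool) (ω : Ω) :
    ∏ j, ((b j ω).toNat : ℝ) = (⋂ j, b j ⁻¹' {true}).indicator (fun _ => 1) ω := by
  have htoNat : ∀ c : Bool, ((c.toNat : ℕ) : ℝ) = if c = true then 1 else 0 := by
    intro c; cases c <;> simp
  simp [htoNat, Fintype.prod_boole, Set.indicator]

section InversePropensityWeighting

variable {Ω : Type*} {m mΩ : MeasurableSpace Ω} {μ : Measure Ω}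

theorem integrable_indicator_one_mul {s : Set Ω} (hs : MeasurableSet s) {f : Ω → ℝ}
    (hf : Integrable f μ) : Integrable (fun ω => s.indicator (fun _ => (1 : ℝ)) ω * f ω) μ := by
  simpa only [← Set.indicator_mul_left, one_mul] using hf.indicator hs

noncomputable def inversePropensityWeight {n : ℕ} (μ : Measure Ω) (G : Fin n → MeasurableSpace Ω)
    (s : Fin n → Set Ω) (ω : Ω) : ℝ :=
  ∏ j, (s j).indicator (fun _ => 1) ω / (μ⟦s j | G j⟧) ω

theorem inversePropensityWeight_zero (G : Fin 0 → MeasurableSpace Ω) (s : Fin 0 → Set Ω) :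
    inversePropensityWeight μ G s = 1 := by
  ext ω
  simp [inversePropensityWeight]

theorem inversePropensityWeight_succ {n : ℕ} (G : Fin (n + 1) → MeasurableSpace Ω)
    (s : Fin (n + 1) → Set Ω) (ω : Ω) :
    inversePropensityWeight μ G s ω
      = inversePropensityWeight μ (fun j => G j.castSucc) (fun j => s j.castSucc) ω
        * ((s (Fin.last n)).indicator (fun _ => 1) ω / (μ⟦s (Fin.last n) | G (Fin.last n)⟧) ω) :=
  Fin.prod_univ_castSucc _

theorem inversePropensityWeight_eq_zero {n : ℕ} (G : Fin n → MeasurableSpace Ω)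
    {s : Fin n → Set Ω} {ω : Ω} {j : Fin n} (hω : ω ∉ s j) :
    inversePropensityWeight μ G s ω = 0 :=
  Finset.prod_eq_zero (Finset.mem_univ j) (by rw [Set.indicator_of_notMem hω, zero_div])

theorem mul_inversePropensityWeight_congr {n : ℕ} (G : Fin n → MeasurableSpace Ω)
    {s : Fin n → Set Ω} {ω : Ω} {a b : ℝ} (hab : (∀ j, ω ∈ s j) → a = b) :
    a * inversePropensityWeight μ G s ω = b * inversePropensityWeight μ G s ω := by
  by_cases hω : ∀ j, ω ∈ s j
  · rw [hab hω]
  · obtain ⟨j, hj⟩ := not_forall.1 hω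
    rw [inversePropensityWeight_eq_zero G hj, mul_zero, mul_zero]

theorem measurable_inversePropensityWeight {n : ℕ} {G : Fin n → MeasurableSpace Ω}
    {s : Fin n → Set Ω} (hG : ∀ j, G j ≤ m) (hs : ∀ j, MeasurableSet[m] (s j)) :
    Measurable[m] (inversePropensityWeight μ G s) :=
  Finset.measurable_prod _ fun j _ => (measurable_const.indicator (hs j)).div
    (stronglyMeasurable_condExp.measurable.mono (hG j) le_rfl)

theorem inversePropensityWeight_nonneg {n : ℕ} (G : Fin n → MeasurableSpace Ω)
    (s : Fin n → Set Ω) : 0 ≤ᵐ[μ] inversePropensityWeight μ G s := by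
  have h : ∀ᵐ ω ∂μ, ∀ j, 0 ≤ (μ⟦s j | G j⟧) ω := ae_all_iff.2 fun j =>
    condExp_nonneg (ae_of_all _ (Set.indicator_nonneg fun _ _ => zero_le_one))
  filter_upwards [h] with ω hω
  exact Finset.prod_nonneg fun j _ =>
    div_nonneg (Set.indicator_nonneg (fun _ _ => zero_le_one) ω) (hω j)

variable [IsFiniteMeasure μ]

theorem lintegral_mul_ofReal_condExp (hm : m ≤ mΩ) {g : Ω → ℝ} (hg : Integrable g μ)
    (hg0 : 0 ≤ᵐ[μ] g) {u : Ω → ℝ≥0∞} (hu : Measurable[m] u) :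
    ∫⁻ ω, u ω * ENNReal.ofReal (μ[g|m] ω) ∂μ = ∫⁻ ω, u ω * ENNReal.ofReal (g ω) ∂μ := by
  have hdens : ∀ f : Ω → ℝ, Integrable f μ →
      ∫⁻ ω, u ω * ENNReal.ofReal (f ω) ∂μ
        = ∫⁻ ω, u ω ∂((μ.withDensity fun ω => ENNReal.ofReal (f ω)).trim hm) := by
    intro f hf
    rw [lintegral_trim hm hu, lintegral_withDensity_eq_lintegral_mul₀
      hf.1.aemeasurable.ennreal_ofReal (hu.mono hm le_rfl).aemeasurable]
    simp only [Pi.mul_apply, mul_comm]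
  have hcond0 : 0 ≤ᵐ[μ] μ[g|m] := condExp_nonneg hg0
  rw [hdens _ integrable_condExp, hdens g hg]
  congr 1
  refine @Measure.ext Ω m _ _ fun t ht => ?_
  rw [trim_measurableSet_eq hm ht, trim_measurableSet_eq hm ht,
    withDensity_apply' _ _, withDensity_apply' _ _,
    ← ofReal_integral_eq_lintegral_ofReal integrable_condExp.restrict (ae_restrict_of_ae hcond0),
    ← ofReal_integral_eq_lintegral_ofReal hg.restrict (ae_restrict_of_ae hg0),
    setIntegral_condExp hm hg ht]

theorem condExp_indicator_compl (hm : m ≤ mΩ) {s : Set Ω} (hs : MeasurableSet s) :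
    μ⟦sᶜ | m⟧ =ᵐ[μ] 1 - μ⟦s | m⟧ := by
  rw [Set.indicator_compl]
  filter_upwards [condExp_sub (integrable_const (1 : ℝ)) ((integrable_const 1).indicator hs) m]
    with ω hω
  rw [hω, Pi.sub_apply, condExp_const hm]
  rfl

theorem condExp_indicator_preimage_pos (hm : m ≤ mΩ) {Z : Ω → Bool} (hZ : Measurable Z)
    (hpos : ∀ᵐ ω ∂μ, 0 < (μ⟦Z ⁻¹' {true} | m⟧) ω ∧ (μ⟦Z ⁻¹' {true} | m⟧) ω < 1) (b : Bool) :
    ∀ᵐ ω ∂μ, 0 < (μ⟦Z ⁻¹' {b} | m⟧) ω := by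
  cases b
  · have hfalse : Z ⁻¹' {false} = (Z ⁻¹' {true})ᶜ := by ext; simp
    filter_upwards [hfalse ▸ condExp_indicator_compl hm (hZ (measurableSet_singleton true)), hpos]
      with ω hω hposω
    rw [hω, Pi.sub_apply, Pi.one_apply, sub_pos]
    exact hposω.2
  · exact hpos.mono fun _ h => h.1

section Step

variable (hm : m ≤ mΩ) {s : Set Ω} (hs : MeasurableSet s) (hpos : ∀ᵐ ω ∂μ, 0 < (μ⟦s | m⟧) ω)
  {H : Ω → ℝ} (hH : Measurable[m] H) (hHint : Integrable H μ) (hH0 : 0 ≤ᵐ[μ] H)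
include hm hs hpos hH hHint hH0

theorem integrable_mul_indicator_div_condExp :
    Integrable (fun ω => H ω * (s.indicator (fun _ => (1 : ℝ)) ω / (μ⟦s | m⟧) ω)) μ := by
  have hp : Measurable[m] (μ⟦s | m⟧) := stronglyMeasurable_condExp.measurable
  have hs1 : ∀ ω, 0 ≤ s.indicator (fun _ => (1 : ℝ)) ω :=
    Set.indicator_nonneg fun _ _ => zero_le_one
  refine ⟨((hH.mono hm le_rfl).mul
    ((measurable_const.indicator hs).div (hp.mono hm le_rfl))).aestronglyMeasurable, ?_⟩
  calc ∫⁻ ω, ‖H ω * (s.indicator (fun _ => (1 : ℝ)) ω / (μ⟦s | m⟧) ω)‖ₑ ∂μ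
      = ∫⁻ ω, ENNReal.ofReal (H ω / (μ⟦s | m⟧) ω)
          * ENNReal.ofReal (s.indicator (fun _ => (1 : ℝ)) ω) ∂μ := by
        refine lintegral_congr_ae ?_
        filter_upwards [hpos, hH0] with ω hpω hHω
        rw [← ENNReal.ofReal_mul (div_nonneg hHω hpω.le), div_mul_eq_mul_div,
          Real.enorm_eq_ofReal (mul_nonneg hHω (div_nonneg (hs1 ω) hpω.le)), mul_div_assoc]
    _ = ∫⁻ ω, ENNReal.ofReal (H ω / (μ⟦s | m⟧) ω) * ENNReal.ofReal ((μ⟦s | m⟧) ω) ∂μ :=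
        (lintegral_mul_ofReal_condExp hm ((integrable_const 1).indicator hs)
          (ae_of_all _ hs1) (hH.div hp).ennreal_ofReal).symm
    _ = ∫⁻ ω, ‖H ω‖ₑ ∂μ := by
        refine lintegral_congr_ae ?_
        filter_upwards [hpos, hH0] with ω hpω hHω
        rw [← ENNReal.ofReal_mul (div_nonneg hHω hpω.le), div_mul_cancel₀ _ hpω.ne',
          Real.enorm_eq_ofReal hHω]
    _ < ⊤ := hHint.2

theorem condExp_indicator_mul_indicator_div_condExp {B : Set Ω} (hB : MeasurableSet B)
    (hindep : μ⟦s ∩ B | m⟧ =ᵐ[μ] μ⟦s | m⟧ * μ⟦B | m⟧) :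
    μ[fun ω => B.indicator (fun _ => (1 : ℝ)) ω
        * (H ω * (s.indicator (fun _ => (1 : ℝ)) ω / (μ⟦s | m⟧) ω)) | m]
      =ᵐ[μ] μ[fun ω => B.indicator (fun _ => (1 : ℝ)) ω * H ω | m] := by
  have hHp : Measurable[m] fun ω => H ω / (μ⟦s | m⟧) ω :=
    hH.div stronglyMeasurable_condExp.measurable
  have hrearrange : (fun ω => B.indicator (fun _ => (1 : ℝ)) ω
        * (H ω * (s.indicator (fun _ => (1 : ℝ)) ω / (μ⟦s | m⟧) ω)))
      = (fun ω => H ω / (μ⟦s | m⟧) ω) * (s ∩ B).indicator fun _ => (1 : ℝ) := by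
    ext ω
    rw [Pi.mul_apply, ← Pi.one_def, Set.inter_indicator_one, Pi.mul_apply]
    simp only [Pi.one_def]
    ring
  calc _ = μ[(fun ω => H ω / (μ⟦s | m⟧) ω) * (s ∩ B).indicator fun _ => (1 : ℝ) | m] := by
        rw [hrearrange]
    _ =ᵐ[μ] (fun ω => H ω / (μ⟦s | m⟧) ω) * μ⟦s ∩ B | m⟧ :=
        condExp_mul_of_stronglyMeasurable_left hHp.stronglyMeasurable
          (hrearrange ▸ integrable_indicator_one_mul hB
            (integrable_mul_indicator_div_condExp hm hs hpos hH hHint hH0))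
          ((integrable_const 1).indicator (hs.inter hB))
    _ =ᵐ[μ] H * μ⟦B | m⟧ := by
        filter_upwards [hindep, hpos] with ω hω hpω
        simp only [Pi.mul_apply, hω]
        field_simp
    _ =ᵐ[μ] μ[H * B.indicator fun _ => (1 : ℝ) | m] :=
        (condExp_mul_of_stronglyMeasurable_left hH.stronglyMeasurable
          ((integrable_indicator_one_mul hB hHint).congr (ae_of_all _ fun ω => mul_comm _ _))
          ((integrable_const 1).indicator hB)).symm
    _ = μ[fun ω => B.indicator (fun _ => (1 : ℝ)) ω * H ω | m] := by
        simp only [Pi.mul_def, mul_comm]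

end Step

section Weighting

variable {n : ℕ} {G : Fin n → MeasurableSpace Ω} {s : Fin n → Set Ω}
  (hG : ∀ j, G j ≤ mΩ) (hGmono : Monotone G) (hs : ∀ j, MeasurableSet (s j))
  (hsG : ∀ j k, j < k → MeasurableSet[G k] (s j)) (hpos : ∀ j, ∀ᵐ ω ∂μ, 0 < (μ⟦s j | G j⟧) ω)
include hG hGmono hs hsG hpos

theorem integrable_inversePropensityWeight :
    Integrable (inversePropensityWeight μ G s) μ := by
  induction n with
  | zero => rw [inversePropensityWeight_zero]; exact integrable_const 1
  | succ n ih =>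
    rw [funext (inversePropensityWeight_succ G s)]
    exact integrable_mul_indicator_div_condExp (hG _) (hs _) (hpos _)
      (measurable_inversePropensityWeight (fun j => hGmono (Fin.castSucc_lt_last j).le)
        fun j => hsG _ _ (Fin.castSucc_lt_last j))
      (ih (fun j => hG _) (hGmono.comp Fin.strictMono_castSucc.monotone) (fun j => hs _)
        (fun j k hjk => hsG _ _ (Fin.castSucc_lt_castSucc_iff.2 hjk)) fun j => hpos _)
      (inversePropensityWeight_nonneg _ _)

theorem condExp_indicator_mul_inversePropensityWeight {m₀ : MeasurableSpace Ω}
    (hm₀ : ∀ j, m₀ ≤ G j) {B : Set Ω} (hB : MeasurableSet[mΩ] B)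
    (hindep : ∀ j, μ⟦s j ∩ B | G j⟧ =ᵐ[μ] μ⟦s j | G j⟧ * μ⟦B | G j⟧) :
    μ[fun ω => B.indicator (fun _ => (1 : ℝ)) ω * inversePropensityWeight μ G s ω | m₀]
      =ᵐ[μ] μ⟦B | m₀⟧ := by
  induction n with
  | zero => simp only [inversePropensityWeight_zero, Pi.one_apply, mul_one]; rfl
  | succ n ih =>
    have hG' : ∀ j : Fin n, G j.castSucc ≤ mΩ := fun j => hG _
    have hGmono' : Monotone fun j : Fin n => G j.castSucc :=
      hGmono.comp Fin.strictMono_castSucc.monotone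
    have hsG' : ∀ j k : Fin n, j < k → MeasurableSet[G k.castSucc] (s j.castSucc) :=
      fun j k hjk => hsG _ _ (Fin.castSucc_lt_castSucc_iff.2 hjk)
    have hlast := condExp_indicator_mul_indicator_div_condExp (hG _) (hs _) (hpos _)
      (measurable_inversePropensityWeight (fun j => hGmono (Fin.castSucc_lt_last j).le)
        fun j => hsG _ _ (Fin.castSucc_lt_last j))
      (integrable_inversePropensityWeight hG' hGmono' (fun j => hs _) hsG' fun j => hpos _)
      (inversePropensityWeight_nonneg _ _) hB (hindep _)
    simp_rw [inversePropensityWeight_succ]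
    calc _ =ᵐ[μ] μ[μ[_ | G (Fin.last n)] | m₀] :=
          (condExp_condExp_of_le (hm₀ _) (hG _)).symm
      _ =ᵐ[μ] μ[μ[_ | G (Fin.last n)] | m₀] := condExp_congr_ae hlast
      _ =ᵐ[μ] _ := condExp_condExp_of_le (hm₀ _) (hG _)
      _ =ᵐ[μ] μ⟦B | m₀⟧ :=
          ih hG' hGmono' (fun j => hs _) hsG' (fun j => hpos _) (fun j => hm₀ _) fun j => hindep _

end Weighting

end InversePropensityWeighting

theorem lemma_4_1_general
    {Ω : Type*} {mΩ : MeasurableSpace Ω} [StandardBorelSpace Ω]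
    (μ : Measure Ω) [IsProbabilityMeasure μ]
    (T : ℕ)
    -- spaces of covariate values (standard Borel)
    (𝒳 : ℕ → Type*) [∀ j, MeasurableSpace (𝒳 j)]
    -- initial covariate, instruments, potential treatments, potential outcomes
    (X0 : Ω → 𝒳 0)
    (Z : Fin (T + 1) → Ω → Bool)
    (W : Fin (T + 1) → Bool → Ω → Bool)
    (Y : (j : Fin (T + 1)) → ((Fin (j.1 + 1)) → Bool) → Ω → ℝ)
    (X : (j : Fin (T + 1)) → ((Fin (j.1 + 1)) → Bool) → Ω → 𝒳 (j.1 + 1))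
    (hZ : ∀ j, Measurable (Z j))
    (hW : ∀ j b, Measurable (W j b))
    -- observed variables, via consistency
    (Wobs : Fin (T + 1) → Ω → Bool)
    (hWobs : ∀ j ω, Wobs j ω = W j (Z j ω) ω)
    (Yobs : Fin (T + 1) → Ω → ℝ)
    (Xobs : (j : Fin (T + 1)) → Ω → 𝒳 (j.1 + 1))
    -- σ-algebra 𝒪 generated by X0 and all potential treatments and outcomes
    (mO : MeasurableSpace Ω)
    (hmO : mO = MeasurableSpace.comap X0 inferInstance
        ⊔ (⨆ j, ⨆ b, MeasurableSpace.comap (W j b) inferInstance)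
        ⊔ (⨆ j, ⨆ w, (MeasurableSpace.comap (Y j w) inferInstance
              ⊔ MeasurableSpace.comap (X j w) inferInstance)))
    -- observed history σ-algebras G_j = σ(O_0, …, O_j, Z_0, …, Z_{j-1})
    (G : Fin (T + 1) → MeasurableSpace Ω)
    (hGdef : ∀ j, G j = MeasurableSpace.comap X0 inferInstance
        ⊔ (⨆ k, ⨆ _ : (k : ℕ) < (j : ℕ),
            (MeasurableSpace.comap (Yobs (Fin.ofNat (T + 1) k)) inferInstance
              ⊔ MeasurableSpace.comap (Xobs (Fin.ofNat (T + 1) k)) inferInstance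
              ⊔ MeasurableSpace.comap (Z (Fin.ofNat (T + 1) k)) inferInstance)))
    (hGle : ∀ j, G j ≤ mΩ)
    -- (SR) sequential randomization: Z_j ⟂ 𝒪 | G_j
    (hSR : ∀ j, CondIndep (G j) (MeasurableSpace.comap (Z j) inferInstance) mO (hGle j) μ)
    -- (POS) positivity: 0 < P(Z_j = 1 | G_j) < 1 a.s.
    (hPOS : ∀ j, ∀ᵐ ω ∂μ,
        0 < (μ[fun ω' => if Z j ω' = true then (1 : ℝ) else 0 | G j]) ω ∧
        (μ[fun ω' => if Z j ω' = true then (1 : ℝ) else 0 | G j]) ω < 1)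
    -- fixed (i_0, …, i_T) ∈ {0,1}^{T+1}
    (i : Fin (T + 1) → Bool) :
    μ[fun ω => (∏ j, ((Wobs j ω).toNat : ℝ)) *
        ∏ j, (if Z j ω = i j then (1 : ℝ) else 0) /
          (μ[fun ω' => if Z j ω' = i j then (1 : ℝ) else 0 | G j]) ω
      | MeasurableSpace.comap X0 inferInstance]
    =ᵐ[μ]
    μ[fun ω => ∏ j, ((W j (i j) ω).toNat : ℝ)
      | MeasurableSpace.comap X0 inferInstance] := by
  set s : Fin (T + 1) → Set Ω := fun j => Z j ⁻¹' {i j}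
  set B : Set Ω := ⋂ j, W j (i j) ⁻¹' {true}
  have hind : ∀ j b ω,
      (if Z j ω = b then (1 : ℝ) else 0) = (Z j ⁻¹' {b}).indicator (fun _ => 1) ω :=
    fun j b ω => by simp [Set.indicator]
  have hsG : ∀ j k, j < k → MeasurableSet[G k] (s j) := fun j k hjk => by
    have hZG := le_of_forall_eq_sup_biSup_lt hGdef hjk
    rw [Fin.ofNat_val_eq_self] at hZG
    exact Measurable.of_comap_le (le_sup_right.trans hZG) (measurableSet_singleton _)
  have hs : ∀ j, MeasurableSet[mΩ] (s j) := fun j => hZ j (measurableSet_singleton _)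
  have hB : MeasurableSet[mΩ] B := .iInter fun j => hW j (i j) (measurableSet_singleton _)
  have hBO : MeasurableSet[mO] B := .iInter fun j => Measurable.of_comap_le
    (hmO ▸ le_sup_of_le_left (le_sup_of_le_right (le_iSup₂_of_le j (i j) le_rfl)))
    (measurableSet_singleton true)
  have hindep : ∀ j, μ⟦s j ∩ B | G j⟧ =ᵐ[μ] μ⟦s j | G j⟧ * μ⟦B | G j⟧ := fun j =>
    (condIndepSet_iff _ (hGle j) _ _ (hs j) hB μ).1
      ((hSR j).condIndepSet_of_measurableSet ⟨{i j}, measurableSet_singleton _, rfl⟩ hBO)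
  simp only [hind] at hPOS
  have hpos : ∀ j, ∀ᵐ ω ∂μ, 0 < (μ⟦s j | G j⟧) ω := fun j =>
    condExp_indicator_preimage_pos (hGle j) (hZ j) (hPOS j) (i j)
  have hconsistency : ∀ ω, (∏ j, ((Wobs j ω).toNat : ℝ)) * inversePropensityWeight μ G s ω
      = B.indicator (fun _ => 1) ω * inversePropensityWeight μ G s ω := fun ω =>
    mul_inversePropensityWeight_congr G fun hZi => by
      simp only [hWobs, show ∀ j, Z j ω = i j from hZi]
      exact prod_toNat_eq_indicator_iInter (fun j => W j (i j)) ω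
  calc _ = μ[fun ω => B.indicator (fun _ => (1 : ℝ)) ω * inversePropensityWeight μ G s ω
        | MeasurableSpace.comap X0 inferInstance] := by
        simp only [hind, ← hconsistency]
        rfl
    _ =ᵐ[μ] μ⟦B | MeasurableSpace.comap X0 inferInstance⟧ :=
        condExp_indicator_mul_inversePropensityWeight hGle
          (monotone_of_forall_eq_sup_biSup_lt hGdef) hs hsG hpos
          (fun j => (hGdef j).ge.trans' le_sup_left) hB hindep
    _ = _ := by simp only [B, prod_toNat_eq_indicator_iInter]

theorem lemma_4_1
    {Ω : Type*} {mΩ : MeasurableSpace Ω} [StandardBorelSpace Ω] [Nonempty Ω]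
    (μ : Measure Ω) [IsProbabilityMeasure μ]
    (T : ℕ)
    -- spaces of covariate values (standard Borel)
    (𝒳 : ℕ → Type*) [∀ j, MeasurableSpace (𝒳 j)] [∀ j, StandardBorelSpace (𝒳 j)]
    -- initial covariate, instruments, potential treatments, potential outcomes
    (X0 : Ω → 𝒳 0)
    (Z : Fin (T + 1) → Ω → Bool)
    (W : Fin (T + 1) → Bool → Ω → Bool)
    (Y : (j : Fin (T + 1)) → ((Fin (j.1 + 1)) → Bool) → Ω → ℝ)
    (X : (j : Fin (T + 1)) → ((Fin (j.1 + 1)) → Bool) → Ω → 𝒳 (j.1 + 1))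
    (hX0 : Measurable X0)
    (hZ : ∀ j, Measurable (Z j))
    (hW : ∀ j b, Measurable (W j b))
    (hY : ∀ j w, Measurable (Y j w))
    (hX : ∀ j w, Measurable (X j w))
    -- observed variables, via consistency
    (Wobs : Fin (T + 1) → Ω → Bool)
    (hWobs : ∀ j ω, Wobs j ω = W j (Z j ω) ω)
    (Yobs : Fin (T + 1) → Ω → ℝ)
    (hYobs : ∀ j ω, Yobs j ω = Y j (fun k => Wobs (Fin.castLE j.isLt k) ω) ω)
    (Xobs : (j : Fin (T + 1)) → Ω → 𝒳 (j.1 + 1))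
    (hXobs : ∀ j ω, Xobs j ω = X j (fun k => Wobs (Fin.castLE j.isLt k) ω) ω)
    -- σ-algebra 𝒪 generated by X0 and all potential treatments and outcomes
    (mO : MeasurableSpace Ω)
    (hmO : mO = MeasurableSpace.comap X0 inferInstance
        ⊔ (⨆ j, ⨆ b, MeasurableSpace.comap (W j b) inferInstance)
        ⊔ (⨆ j, ⨆ w, (MeasurableSpace.comap (Y j w) inferInstance
              ⊔ MeasurableSpace.comap (X j w) inferInstance)))
    -- observed history σ-algebras G_j = σ(O_0, …, O_j, Z_0, …, Z_{j-1})
    (G : Fin (T + 1) → MeasurableSpace Ω)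
    (hGdef : ∀ j, G j = MeasurableSpace.comap X0 inferInstance
        ⊔ (⨆ k, ⨆ _ : (k : ℕ) < (j : ℕ),
            (MeasurableSpace.comap (Yobs (Fin.ofNat (T + 1) k)) inferInstance
              ⊔ MeasurableSpace.comap (Xobs (Fin.ofNat (T + 1) k)) inferInstance
              ⊔ MeasurableSpace.comap (Z (Fin.ofNat (T + 1) k)) inferInstance)))
    (hGle : ∀ j, G j ≤ mΩ)
    -- (SR) sequential randomization: Z_j ⟂ 𝒪 | G_j
    (hSR : ∀ j, CondIndep (G j) (MeasurableSpace.comap (Z j) inferInstance) mO (hGle j) μ)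
    -- (POS) positivity: 0 < P(Z_j = 1 | G_j) < 1 a.s.
    (hPOS : ∀ j, ∀ᵐ ω ∂μ,
        0 < (μ[fun ω' => if Z j ω' = true then (1 : ℝ) else 0 | G j]) ω ∧
        (μ[fun ω' => if Z j ω' = true then (1 : ℝ) else 0 | G j]) ω < 1)
    -- fixed (i_0, …, i_T) ∈ {0,1}^{T+1}
    (i : Fin (T + 1) → Bool) :
    μ[fun ω => (∏ j, ((Wobs j ω).toNat : ℝ)) *
        ∏ j, (if Z j ω = i j then (1 : ℝ) else 0) /
          (μ[fun ω' => if Z j ω' = i j then (1 : ℝ) else 0 | G j]) ω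
      | MeasurableSpace.comap X0 inferInstance]
    =ᵐ[μ]
    μ[fun ω => ∏ j, ((W j (i j) ω).toNat : ℝ)
      | MeasurableSpace.comap X0 inferInstance] :=
  lemma_4_1_general μ T 𝒳 X0 Z W Y X hZ hW Wobs hWobs Yobs Xobs mO hmO G hGdef hGle hSR hPOS i
end

section
/- (Theorem 4.2.) In the IVR model, under consistency, sequential randomization (SR), positivity (POS), monotonicity (MON), and cross-period independence (CI), one has, P-almost surely, P( W_j(1) > W_j(0) for all j = 0,…,T | σ(X_0) ) = E[ (∏_{j=0}^T W_j) · Σ_{(i_0,…,i_T) ∈ {0,1}^{T+1}} ∏_{j=0}^T (−1)^{1−i_j} · 1{Z_j = i_j} / P(Z_j = i_j | G_j) | σ(X_0) ]. -/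
/-!
By (CI) the conditional probability of the event "complier in every period" factors over the
periods, and by (MON) the `j`-th factor is `P(W_j(1) = 1 | X_0) - P(W_j(0) = 1 | X_0)`.
Expanding the product gives a signed sum, over `i ∈ {0,1}^{T+1}`, of the probabilities
`P(⋂_j {W_j(i_j) = 1} | X_0)` (again by (CI)).

By consistency, the `i`-th summand of the estimator is `1_{⋂_j {W_j(i_j) = 1}}` times the
inverse probability weights `1{Z_j = i_j} / P(Z_j = i_j | G_j)`. These weights can be removed
one at a time, latest period first: after conditioning on `G_j`, the earlier weights are
`G_j`-measurable and (SR) gives `E[1{Z_j = i_j} 1_B | G_j] = P(Z_j = i_j | G_j) P(B | G_j)`.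
The weights are unbounded, so integrability is carried along the induction by truncation.
-/

open MeasureTheory ProbabilityTheory MeasurableSpace Filter

lemma ite_eq_indicator_preimage {Ω β : Type*} [DecidableEq β] (Z : Ω → β) (b : β) (ω : Ω) :
    (if Z ω = b then (1 : ℝ) else 0) = (Z ⁻¹' {b}).indicator (fun _ => 1) ω := by
  by_cases h : Z ω = b <;> simp [h]

lemma prod_sub_eq_sum_sign_mul_prod {ι R : Type*} [Fintype ι] [DecidableEq ι] [CommRing R]
    (a : ι → Bool → R) :
    ∏ j, (a j true - a j false)
      = ∑ i : ι → Bool, (∏ j, (-1 : R) ^ (1 - (i j).toNat)) * ∏ j, a j (i j) := by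
  have hsub : ∀ j, a j true - a j false = ∑ b, (-1 : R) ^ (1 - b.toNat) * a j b := fun j => by
    simp [sub_eq_add_neg]
  simp only [hsub, Finset.prod_univ_sum, Fintype.piFinset_univ, Finset.prod_mul_distrib]

section CondExp

variable {Ω : Type*} {m₀ G mΩ : MeasurableSpace Ω} {μ : Measure Ω}

/-- The truncations `min g k * f` have integrals `∫ min g k * μ[f | G] ≤ ∫ g * μ[f | G]`;
monotone convergence finishes. -/
lemma integrable_mul_of_integrable_mul_condExp [IsFiniteMeasure μ] (hG : G ≤ mΩ) {g f : Ω → ℝ}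
    (hg : Measurable[G] g) (hg0 : 0 ≤ᵐ[μ] g) (hf : Integrable f μ) (hf0 : 0 ≤ᵐ[μ] f)
    (hgf : Integrable (g * μ[f | G]) μ) : Integrable (g * f) μ := by
  set gk : ℕ → Ω → ℝ := fun k ω => min (g ω) k
  have hgk : ∀ k, StronglyMeasurable[G] (gk k) := fun k =>
    (hg.min measurable_const).stronglyMeasurable
  have hgk_bound : ∀ k, ∀ᵐ ω ∂μ, ‖gk k ω‖ ≤ k := fun k => by
    filter_upwards [hg0] with ω hω
    rw [Real.norm_of_nonneg (le_min hω k.cast_nonneg)]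
    exact min_le_right _ _
  have hgkf : ∀ k, Integrable (gk k * f) μ := fun k =>
    hf.bdd_mul ((hgk k).mono hG).aestronglyMeasurable (hgk_bound k)
  have hgkf0 : ∀ k, 0 ≤ᵐ[μ] gk k * f := fun k => by
    filter_upwards [hg0, hf0] with ω hg hf using mul_nonneg (le_min hg k.cast_nonneg) hf
  have hint_le : ∀ k, ∫ ω, (gk k * f) ω ∂μ ≤ ∫ ω, (g * μ[f | G]) ω ∂μ := fun k => calc
    ∫ ω, (gk k * f) ω ∂μ = ∫ ω, (gk k * μ[f | G]) ω ∂μ := by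
      rw [← integral_condExp hG]
      exact integral_congr_ae
        (condExp_stronglyMeasurable_mul_of_bound hG (hgk k) hf k (hgk_bound k))
    _ ≤ ∫ ω, (g * μ[f | G]) ω ∂μ := by
      refine integral_mono_ae (integrable_condExp.bdd_mul
        ((hgk k).mono hG).aestronglyMeasurable (hgk_bound k)) hgf ?_
      filter_upwards [condExp_nonneg (m := G) hf0] with ω hc
      exact mul_le_mul_of_nonneg_right (min_le_left _ _) hc
  have hsup : ∀ᵐ ω ∂μ, ENNReal.ofReal ((g * f) ω) = ⨆ k, ENNReal.ofReal ((gk k * f) ω) := by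
    filter_upwards [hf0] with ω hω
    refine le_antisymm (le_iSup_of_le ⌈g ω⌉₊ ?_) (iSup_le fun k => ?_)
    · simp only [Pi.mul_apply, gk, min_eq_left (Nat.le_ceil (g ω)), le_refl]
    · exact ENNReal.ofReal_le_ofReal (mul_le_mul_of_nonneg_right (min_le_left _ _) hω)
  refine ⟨(hg.mono hG le_rfl).aestronglyMeasurable.mul hf.1, ?_⟩
  rw [hasFiniteIntegral_iff_ofReal
      (by filter_upwards [hg0, hf0] with ω hg hf using mul_nonneg hg hf),
    lintegral_congr_ae hsup, lintegral_iSup' (fun k => (hgkf k).aemeasurable.ennreal_ofReal)]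
  · refine lt_of_le_of_lt (iSup_le fun k => ?_)
      (ENNReal.ofReal_lt_top (r := ∫ ω, (g * μ[f | G]) ω ∂μ))
    rw [← ofReal_integral_eq_lintegral_ofReal (hgkf k) (hgkf0 k)]
    exact ENNReal.ofReal_le_ofReal (hint_le k)
  · filter_upwards [hg0, hf0] with ω hg hf k l hkl
    exact ENNReal.ofReal_le_ofReal
      (mul_le_mul_of_nonneg_right (min_le_min le_rfl (Nat.cast_le.2 hkl)) hf)

lemma condExp_indicator_compl_s1 [IsFiniteMeasure μ] (hG : G ≤ mΩ) {S : Set Ω}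
    (hS : MeasurableSet S) : μ⟦Sᶜ | G⟧ =ᵐ[μ] 1 - μ⟦S | G⟧ := by
  rw [Set.indicator_compl]
  refine (condExp_sub (μ := μ) (integrable_const (1 : ℝ))
    ((integrable_const (1 : ℝ)).indicator hS) G).trans ?_
  rw [condExp_const hG]
  rfl

lemma ae_condExp_preimage_pos [IsFiniteMeasure μ] (hG : G ≤ mΩ) {Z : Ω → Bool}
    (hZ : Measurable Z)
    (hpos : ∀ᵐ ω ∂μ, 0 < (μ⟦Z ⁻¹' {true} | G⟧) ω ∧ (μ⟦Z ⁻¹' {true} | G⟧) ω < 1) (b : Bool) :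
    ∀ᵐ ω ∂μ, 0 < (μ⟦Z ⁻¹' {b} | G⟧) ω := by
  cases b
  · have hfalse : Z ⁻¹' {false} = (Z ⁻¹' {true})ᶜ := by ext; simp
    filter_upwards [hpos, hfalse ▸ condExp_indicator_compl_s1 hG (hZ (measurableSet_singleton true))]
      with ω hω hcompl
    simpa [hcompl] using hω.2
  · filter_upwards [hpos] with ω hω using hω.1

lemma condExp_indicator_lt_eq_sub [IsFiniteMeasure μ] {W₀ W₁ : Ω → Bool} (hW₀ : Measurable W₀)
    (hW₁ : Measurable W₁) (hle : ∀ᵐ ω ∂μ, W₀ ω ≤ W₁ ω) :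
    μ⟦{ω | W₀ ω < W₁ ω} | G⟧ =ᵐ[μ] μ⟦W₁ ⁻¹' {true} | G⟧ - μ⟦W₀ ⁻¹' {true} | G⟧ := by
  have hind : {ω | W₀ ω < W₁ ω}.indicator (fun _ => (1 : ℝ))
      =ᵐ[μ] (W₁ ⁻¹' {true}).indicator (fun _ => 1) - (W₀ ⁻¹' {true}).indicator (fun _ => 1) := by
    filter_upwards [hle] with ω hω
    cases h₀ : W₀ ω <;> cases h₁ : W₁ ω <;> simp_all [Bool.le_iff_imp]
  exact (condExp_congr_ae hind).trans (condExp_sub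
    ((integrable_const _).indicator (hW₁ (measurableSet_singleton true)))
    ((integrable_const _).indicator (hW₀ (measurableSet_singleton true))) G)

/-- Where `P(S | G)` vanishes the weight is `0` by the convention `x / 0 = 0`. -/
noncomputable def invProbWeight {mΩ : MeasurableSpace Ω} (μ : Measure Ω) (G : MeasurableSpace Ω)
    (S : Set Ω) (ω : Ω) : ℝ :=
  S.indicator (fun _ => 1) ω / (μ⟦S | G⟧) ω

lemma measurable_invProbWeight {G' : MeasurableSpace Ω} (hGG' : G ≤ G') {S : Set Ω}
    (hS : MeasurableSet[G'] S) : Measurable[G'] (invProbWeight μ G S) :=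
  (measurable_const.indicator hS).div (stronglyMeasurable_condExp.measurable.mono hGG' le_rfl)

lemma invProbWeight_nonneg {S : Set Ω} (hp : ∀ᵐ ω ∂μ, 0 < (μ⟦S | G⟧) ω) :
    0 ≤ᵐ[μ] invProbWeight μ G S := by
  filter_upwards [hp] with ω hω
  exact div_nonneg (Set.indicator_nonneg (fun _ _ => zero_le_one) ω) hω.le

/-- `F 1_S 1_B / P(S | G)` has conditional expectation `F P(S ∩ B | G) / P(S | G) = F P(B | G)`. -/
lemma condExp_mul_invProbWeight_mul_indicator [IsFiniteMeasure μ] (hG : G ≤ mΩ) {F : Ω → ℝ}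
    (hF : Measurable[G] F) (hF0 : 0 ≤ᵐ[μ] F) {S B : Set Ω} (hS : MeasurableSet S)
    (hB : MeasurableSet B) (hp : ∀ᵐ ω ∂μ, 0 < (μ⟦S | G⟧) ω)
    (hSB : μ⟦S ∩ B | G⟧ =ᵐ[μ] μ⟦S | G⟧ * μ⟦B | G⟧)
    (hFB : Integrable (F * B.indicator (fun _ => 1)) μ) :
    Integrable (F * invProbWeight μ G S * B.indicator (fun _ => 1)) μ ∧
      μ[F * invProbWeight μ G S * B.indicator (fun _ => 1) | G]
        =ᵐ[μ] μ[F * B.indicator (fun _ => 1) | G] := by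
  set g : Ω → ℝ := F / μ⟦S | G⟧
  have hg : Measurable[G] g := hF.div stronglyMeasurable_condExp.measurable
  have hg0 : 0 ≤ᵐ[μ] g := by
    filter_upwards [hF0, hp] with ω hF hp using div_nonneg hF hp.le
  have hrw : F * invProbWeight μ G S * B.indicator (fun _ => 1)
      = g * (S ∩ B).indicator (fun _ => 1) := by
    ext ω
    by_cases hωS : ω ∈ S <;> by_cases hωB : ω ∈ B <;>
      simp [invProbWeight, g, hωS, hωB, div_eq_mul_inv]
  have hgSB : g * μ⟦S ∩ B | G⟧ =ᵐ[μ] F * μ⟦B | G⟧ := by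
    filter_upwards [hSB, hp] with ω hSB hp
    simp only [Pi.mul_apply, Pi.div_apply, g, hSB]
    field_simp
  have hpull : μ[F * B.indicator (fun _ => 1) | G] =ᵐ[μ] F * μ⟦B | G⟧ :=
    condExp_mul_of_stronglyMeasurable_left hF.stronglyMeasurable hFB
      ((integrable_const _).indicator hB)
  have hSB_int : Integrable ((S ∩ B).indicator fun _ => (1 : ℝ)) μ :=
    (integrable_const _).indicator (hS.inter hB)
  have hint : Integrable (g * (S ∩ B).indicator (fun _ => 1)) μ :=
    integrable_mul_of_integrable_mul_condExp hG hg hg0 hSB_int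
      (Eventually.of_forall (Set.indicator_nonneg fun _ _ => zero_le_one))
      (integrable_condExp.congr (hpull.trans hgSB.symm))
  rw [hrw]
  exact ⟨hint, (condExp_mul_of_stronglyMeasurable_left hg.stronglyMeasurable hint
    hSB_int).trans (hgSB.trans hpull.symm)⟩

lemma condExp_prod_invProbWeight_mul_indicator [IsFiniteMeasure μ] {ι : Type*} [LinearOrder ι]
    {G : ι → MeasurableSpace Ω} (hm₀ : ∀ j, m₀ ≤ G j) (hG : ∀ j, G j ≤ mΩ)
    (hGmono : Monotone G) {S : ι → Set Ω} (hS : ∀ j, MeasurableSet (S j))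
    (hSG : ∀ j k, j < k → MeasurableSet[G k] (S j)) {B : Set Ω} (hB : MeasurableSet B)
    (hp : ∀ j, ∀ᵐ ω ∂μ, 0 < (μ⟦S j | G j⟧) ω)
    (hSB : ∀ j, μ⟦S j ∩ B | G j⟧ =ᵐ[μ] μ⟦S j | G j⟧ * μ⟦B | G j⟧) (s : Finset ι) :
    Integrable ((∏ j ∈ s, invProbWeight μ (G j) (S j)) * B.indicator (fun _ => 1)) μ ∧
      μ[(∏ j ∈ s, invProbWeight μ (G j) (S j)) * B.indicator (fun _ => 1) | m₀]
        =ᵐ[μ] μ⟦B | m₀⟧ := by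
  classical
  induction s using Finset.induction_on_max with
  | empty => simpa using (integrable_const (1 : ℝ)).indicator hB
  | insert a s hlt ih =>
    have hF : Measurable[G a] (∏ j ∈ s, invProbWeight μ (G j) (S j)) := by
      rw [Finset.prod_fn]
      exact Finset.measurable_prod _ fun j hj =>
        measurable_invProbWeight (hGmono (hlt j hj).le) (hSG j a (hlt j hj))
    have hF0 : 0 ≤ᵐ[μ] ∏ j ∈ s, invProbWeight μ (G j) (S j) := by
      filter_upwards [(eventually_all_finset s).2 fun j _ => invProbWeight_nonneg (hp j)]
        with ω hω
      simpa only [Finset.prod_apply, Pi.zero_apply] using Finset.prod_nonneg hω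
    obtain ⟨hint, hcond⟩ := condExp_mul_invProbWeight_mul_indicator (hG a) hF hF0 (hS a) hB
      (hp a) (hSB a) ih.1
    rw [Finset.prod_insert fun ha => (hlt a ha).false, mul_comm (invProbWeight _ _ _)]
    refine ⟨hint, ?_⟩
    calc μ[(∏ j ∈ s, invProbWeight μ (G j) (S j)) * invProbWeight μ (G a) (S a)
          * B.indicator (fun _ => 1) | m₀]
        =ᵐ[μ] μ[μ[(∏ j ∈ s, invProbWeight μ (G j) (S j)) * invProbWeight μ (G a) (S a)
          * B.indicator (fun _ => 1) | G a] | m₀] :=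
        (condExp_condExp_of_le (hm₀ a) (hG a)).symm
      _ =ᵐ[μ] μ[μ[(∏ j ∈ s, invProbWeight μ (G j) (S j)) * B.indicator (fun _ => 1) | G a]
          | m₀] := condExp_congr_ae hcond
      _ =ᵐ[μ] μ⟦B | m₀⟧ := (condExp_condExp_of_le (hm₀ a) (hG a)).trans ih.2

end CondExp

/-- Only the arm `i = Z ω` that was actually taken has nonzero weights; on it
`W j (Z j ω) = W j (i j)`. -/
lemma prod_toNat_mul_prod_invProbWeight {Ω ι : Type*} [Fintype ι] {mΩ : MeasurableSpace Ω}
    (μ : Measure Ω) (G : ι → MeasurableSpace Ω) (Z : ι → Ω → Bool) (W : ι → Bool → Ω → Bool)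
    (i : ι → Bool) (ω : Ω) :
    (∏ j, ((W j (Z j ω) ω).toNat : ℝ)) * ∏ j, invProbWeight μ (G j) (Z j ⁻¹' {i j}) ω
      = (∏ j, invProbWeight μ (G j) (Z j ⁻¹' {i j}) ω)
        * (⋂ j, W j (i j) ⁻¹' {true}).indicator (fun _ => 1) ω := by
  by_cases hZ : ∀ j, Z j ω = i j
  · rw [mul_comm]
    congr 1
    by_cases hW : ∀ j, W j (i j) ω = true
    · simp [hZ, hW]
    · obtain ⟨j, hj⟩ := not_forall.1 hW
      rw [Set.indicator_of_notMem (by simpa using ⟨j, by simpa using hj⟩)]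
      exact Finset.prod_eq_zero (Finset.mem_univ j) (by simp [hZ, hj])
  · obtain ⟨j, hj⟩ := not_forall.1 hZ
    have hzero : ∏ j, invProbWeight μ (G j) (Z j ⁻¹' {i j}) ω = 0 :=
      Finset.prod_eq_zero (Finset.mem_univ j) (by simp [invProbWeight, hj])
    simp [hzero]

theorem condExp_ipwEstimator_eq_sum {Ω ι : Type*} {m₀ m' mΩ : MeasurableSpace Ω}
    [StandardBorelSpace Ω] {μ : Measure Ω} [IsFiniteMeasure μ] [Fintype ι] [LinearOrder ι]
    {Z : ι → Ω → Bool} (hZ : ∀ j, Measurable (Z j)) {W : ι → Bool → Ω → Bool}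
    (hW : ∀ j b, Measurable[m'] (W j b)) (hm' : m' ≤ mΩ)
    {G : ι → MeasurableSpace Ω} (hm₀ : ∀ j, m₀ ≤ G j) (hG : ∀ j, G j ≤ mΩ) (hGmono : Monotone G)
    (hZG : ∀ j k, j < k → Measurable[G k] (Z j))
    (hSR : ∀ j, CondIndep (G j) (MeasurableSpace.comap (Z j) inferInstance) m' (hG j) μ)
    (hp : ∀ j b, ∀ᵐ ω ∂μ, 0 < (μ⟦Z j ⁻¹' {b} | G j⟧) ω) :
    μ[fun ω => (∏ j, ((W j (Z j ω) ω).toNat : ℝ)) * ∑ i : ι → Bool, ∏ j,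
        ((-1 : ℝ) ^ (1 - (i j).toNat) * (Z j ⁻¹' {i j}).indicator (fun _ => 1) ω
          / (μ⟦Z j ⁻¹' {i j} | G j⟧) ω) | m₀]
      =ᵐ[μ] ∑ i : ι → Bool, (∏ j, (-1 : ℝ) ^ (1 - (i j).toNat))
        • μ⟦⋂ j, W j (i j) ⁻¹' {true} | m₀⟧ := by
  classical
  set B : (ι → Bool) → Set Ω := fun i => ⋂ j, W j (i j) ⁻¹' {true}
  set w : (ι → Bool) → Ω → ℝ := fun i => ∏ j, invProbWeight μ (G j) (Z j ⁻¹' {i j})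
  have hB : ∀ i, MeasurableSet[m'] (B i) := fun i =>
    .iInter fun j => hW j (i j) (measurableSet_singleton true)
  have hipw : ∀ i, Integrable (w i * (B i).indicator (fun _ => 1)) μ ∧
      μ[w i * (B i).indicator (fun _ => 1) | m₀] =ᵐ[μ] μ⟦B i | m₀⟧ := fun i =>
    condExp_prod_invProbWeight_mul_indicator hm₀ hG hGmono
      (fun j => hZ j (measurableSet_singleton _))
      (fun j k hjk => hZG j k hjk (measurableSet_singleton _)) (hm' _ (hB i))
      (fun j => hp j (i j))
      (fun j => (condIndep_iff _ _ _ (hG j) (hZ j).comap_le hm' μ).1 (hSR j) _ _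
        ⟨{i j}, measurableSet_singleton _, rfl⟩ (hB i)) Finset.univ
  have hintegrand : (fun ω => (∏ j, ((W j (Z j ω) ω).toNat : ℝ)) * ∑ i : ι → Bool, ∏ j,
        ((-1 : ℝ) ^ (1 - (i j).toNat) * (Z j ⁻¹' {i j}).indicator (fun _ => 1) ω
          / (μ⟦Z j ⁻¹' {i j} | G j⟧) ω))
      = ∑ i : ι → Bool, (∏ j, (-1 : ℝ) ^ (1 - (i j).toNat))
        • (w i * (B i).indicator (fun _ => 1)) := by
    ext ω
    simp only [mul_div_assoc, Finset.prod_mul_distrib, Finset.mul_sum, Finset.sum_apply,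
      Pi.smul_apply, Pi.mul_apply, Finset.prod_apply, smul_eq_mul, w, B]
    refine Finset.sum_congr rfl fun i _ => ?_
    rw [mul_left_comm, ← prod_toNat_mul_prod_invProbWeight]
    rfl
  rw [hintegrand]
  refine (condExp_finsetSum (fun i _ => (hipw i).1.smul _) _).trans
    (eventuallyEq_sum fun i _ => (condExp_smul _ _ _).trans ?_)
  filter_upwards [(hipw i).2] with ω hω
  simp only [Pi.smul_apply, hω, B]

lemma ProbabilityTheory.iCondIndepFun.condExp_iInter_preimage {Ω ι : Type*}
    {m₀ mΩ : MeasurableSpace Ω} [StandardBorelSpace Ω] {hm₀ : m₀ ≤ mΩ} {μ : Measure Ω}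
    [IsFiniteMeasure μ] [Fintype ι] {β : ι → Type*} [∀ j, MeasurableSpace (β j)]
    {f : ∀ j, Ω → β j} (hf : ∀ j, Measurable (f j)) (h : iCondIndepFun m₀ hm₀ f μ)
    {s : ∀ j, Set (β j)} (hs : ∀ j, MeasurableSet (s j)) :
    μ⟦⋂ j, f j ⁻¹' s j | m₀⟧ =ᵐ[μ] ∏ j, μ⟦f j ⁻¹' s j | m₀⟧ := by
  simpa using (iCondIndepFun_iff_condExp_inter_preimage_eq_mul _ f hf).1 h Finset.univ
    (sets := s) fun j _ => hs j

section TreatmentPairs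

variable {Ω ι : Type*} {m₀ mΩ : MeasurableSpace Ω} [StandardBorelSpace Ω] {hm₀ : m₀ ≤ mΩ}
  {μ : Measure Ω} [IsFiniteMeasure μ] [Fintype ι] {W : ι → Bool → Ω → Bool}

lemma condExp_indicator_forall_lt_eq_prod_sub (hW : ∀ j b, Measurable (W j b))
    (hCI : iCondIndepFun m₀ hm₀ (fun j ω => (W j false ω, W j true ω)) μ)
    (hMON : ∀ j, ∀ᵐ ω ∂μ, W j false ω ≤ W j true ω) :
    μ⟦{ω | ∀ j, W j false ω < W j true ω} | m₀⟧
      =ᵐ[μ] ∏ j, (μ⟦W j true ⁻¹' {true} | m₀⟧ - μ⟦W j false ⁻¹' {true} | m₀⟧) := by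
  have hset : {ω | ∀ j, W j false ω < W j true ω}
      = ⋂ j, (fun ω => (W j false ω, W j true ω)) ⁻¹' {x | x.1 < x.2} := by
    ext; simp
  rw [hset]
  exact (hCI.condExp_iInter_preimage (fun j => (hW j false).prodMk (hW j true))
    fun _ => (Set.to_countable _).measurableSet).trans (eventuallyEq_prod fun j _ =>
      condExp_indicator_lt_eq_sub (hW j false) (hW j true) (hMON j))

lemma condExp_iInter_preimage_true_eq_prod (hW : ∀ j b, Measurable (W j b))
    (hCI : iCondIndepFun m₀ hm₀ (fun j ω => (W j false ω, W j true ω)) μ) (i : ι → Bool) :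
    μ⟦⋂ j, W j (i j) ⁻¹' {true} | m₀⟧ =ᵐ[μ] ∏ j, μ⟦W j (i j) ⁻¹' {true} | m₀⟧ := by
  have hset : ∀ j, W j (i j) ⁻¹' {true}
      = (fun ω => (W j false ω, W j true ω)) ⁻¹' {x | (if i j then x.2 else x.1) = true} := by
    intro j; ext; cases i j <;> simp
  simp only [hset]
  exact hCI.condExp_iInter_preimage (fun j => (hW j false).prodMk (hW j true))
    fun _ => (Set.to_countable _).measurableSet

end TreatmentPairs
theorem theorem_4_2_general
    {Ω : Type*} {mΩ : MeasurableSpace Ω} [StandardBorelSpace Ω]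
    (μ : Measure Ω) [IsProbabilityMeasure μ]
    (T : ℕ)
    (𝒳 : ℕ → Type*) [∀ j, MeasurableSpace (𝒳 j)]
    (X0 : Ω → 𝒳 0)
    (Z : Fin (T + 1) → Ω → Bool)
    (W : Fin (T + 1) → Bool → Ω → Bool)
    (Y : (j : Fin (T + 1)) → ((Fin (j.1 + 1)) → Bool) → Ω → ℝ)
    (X : (j : Fin (T + 1)) → ((Fin (j.1 + 1)) → Bool) → Ω → 𝒳 (j.1 + 1))
    (hX0 : Measurable X0)
    (hZ : ∀ j, Measurable (Z j))
    (hW : ∀ j b, Measurable (W j b))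
    -- observed variables, via consistency
    (Wobs : Fin (T + 1) → Ω → Bool)
    (hWobs : ∀ j ω, Wobs j ω = W j (Z j ω) ω)
    (Yobs : Fin (T + 1) → Ω → ℝ)
    (Xobs : (j : Fin (T + 1)) → Ω → 𝒳 (j.1 + 1))
    -- σ-algebra 𝒪 generated by X0 and all potential treatments and outcomes
    (mO : MeasurableSpace Ω)
    (hmO : mO = MeasurableSpace.comap X0 inferInstance
        ⊔ (⨆ j, ⨆ b, MeasurableSpace.comap (W j b) inferInstance)
        ⊔ (⨆ j, ⨆ w, (MeasurableSpace.comap (Y j w) inferInstance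
              ⊔ MeasurableSpace.comap (X j w) inferInstance)))
    -- observed history σ-algebras G_j = σ(O_0, …, O_j, Z_0, …, Z_{j-1})
    (G : Fin (T + 1) → MeasurableSpace Ω)
    (hGdef : ∀ j, G j = MeasurableSpace.comap X0 inferInstance
        ⊔ (⨆ k : Fin (T + 1), ⨆ _ : (k : ℕ) < (j : ℕ),
            (MeasurableSpace.comap (Yobs k) inferInstance
              ⊔ MeasurableSpace.comap (Xobs k) inferInstance
              ⊔ MeasurableSpace.comap (Z k) inferInstance)))
    (hGle : ∀ j, G j ≤ mΩ)
    -- (SR) sequential randomization: Z_j ⟂ 𝒪 | G_j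
    (hSR : ∀ j, CondIndep (G j) (MeasurableSpace.comap (Z j) inferInstance) mO (hGle j) μ)
    -- (POS) positivity: 0 < P(Z_j = 1 | G_j) < 1 a.s.
    (hPOS : ∀ j, ∀ᵐ ω ∂μ,
        0 < (μ[fun ω' => if Z j ω' = true then (1 : ℝ) else 0 | G j]) ω ∧
        (μ[fun ω' => if Z j ω' = true then (1 : ℝ) else 0 | G j]) ω < 1)
    -- (MON) monotonicity: P(W_j(1) ≥ W_j(0)) = 1
    (hMON : ∀ j, μ {ω | W j false ω ≤ W j true ω} = 1)
    -- (CI) the pairs (W_j(0), W_j(1)) are mutually conditionally independent given σ(X_0)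
    (hCI : iCondIndepFun (MeasurableSpace.comap X0 inferInstance) (hX0.comap_le)
        (fun j ω => (W j false ω, W j true ω)) μ) :
    μ[Set.indicator {ω | ∀ j, W j false ω < W j true ω} (fun _ => (1 : ℝ))
      | MeasurableSpace.comap X0 inferInstance]
    =ᵐ[μ]
    μ[fun ω => (∏ j, ((Wobs j ω).toNat : ℝ)) *
        ∑ i : Fin (T + 1) → Bool, ∏ j,
          ((-1 : ℝ) ^ (1 - (i j).toNat) * (if Z j ω = i j then (1 : ℝ) else 0) /
            (μ[fun ω' => if Z j ω' = i j then (1 : ℝ) else 0 | G j]) ω)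
      | MeasurableSpace.comap X0 inferInstance] := by
  -- SR is used for the σ-algebra generated by the treatments, which lies below `mO` and `mΩ`.
  let mW : MeasurableSpace Ω := ⨆ j, ⨆ b, MeasurableSpace.comap (W j b) inferInstance
  have hmWO : mW ≤ mO := by
    rw [hmO]
    exact le_sup_of_le_left le_sup_right
  have hWmW : ∀ j b, Measurable[mW] (W j b) := fun j b => Measurable.of_comap_le
    (le_iSup₂ (f := fun j b => MeasurableSpace.comap (W j b) inferInstance) j b)
  have hm₀G : ∀ j, MeasurableSpace.comap X0 inferInstance ≤ G j := fun j => by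
    rw [hGdef j]
    exact le_sup_left
  have hGmono : Monotone G := fun j k hjk => by
    rw [hGdef j, hGdef k]
    refine sup_le_sup_left (iSup₂_le fun l hl => ?_) _
    exact le_iSup₂_of_le l (lt_of_lt_of_le hl (show (j : ℕ) ≤ k from hjk)) le_rfl
  have hZG : ∀ j k, j < k → Measurable[G k] (Z j) := fun j k hjk => by
    refine Measurable.of_comap_le ?_
    rw [hGdef k]
    exact le_sup_of_le_right (le_iSup₂_of_le j (Fin.lt_def.1 hjk) le_sup_right)
  have hMON' : ∀ j, ∀ᵐ ω ∂μ, W j false ω ≤ W j true ω := fun j =>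
    (ae_iff_measure_eq (((hW j false).prodMk (hW j true))
      (Set.to_countable {x : Bool × Bool | x.1 ≤ x.2}).measurableSet).nullMeasurableSet).2
      (by rw [measure_univ]; exact hMON j)
  simp only [hWobs, ite_eq_indicator_preimage] at hPOS ⊢
  filter_upwards [condExp_indicator_forall_lt_eq_prod_sub hW hCI hMON',
    condExp_ipwEstimator_eq_sum hZ hWmW (iSup₂_le fun j b => (hW j b).comap_le) hm₀G hGle
      hGmono hZG (fun j => condIndep_of_condIndep_of_le_right (hSR j) hmWO)
      (fun j => ae_condExp_preimage_pos (hGle j) (hZ j) (hPOS j)),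
    ae_all_iff.2 (condExp_iInter_preimage_true_eq_prod hW hCI)] with ω hLHS hRHS hCIω
  rw [hLHS, hRHS]
  simp only [Finset.prod_apply, Pi.sub_apply, Finset.sum_apply, Pi.smul_apply, smul_eq_mul, hCIω]
  exact prod_sub_eq_sum_sign_mul_prod fun j b => (μ⟦W j b ⁻¹' {true} | _⟧) ω

theorem theorem_4_2
    {Ω : Type*} {mΩ : MeasurableSpace Ω} [StandardBorelSpace Ω] [Nonempty Ω]
    (μ : Measure Ω) [IsProbabilityMeasure μ]
    (T : ℕ)
    (𝒳 : ℕ → Type*) [∀ j, MeasurableSpace (𝒳 j)] [∀ j, StandardBorelSpace (𝒳 j)]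
    (X0 : Ω → 𝒳 0)
    (Z : Fin (T + 1) → Ω → Bool)
    (W : Fin (T + 1) → Bool → Ω → Bool)
    (Y : (j : Fin (T + 1)) → ((Fin (j.1 + 1)) → Bool) → Ω → ℝ)
    (X : (j : Fin (T + 1)) → ((Fin (j.1 + 1)) → Bool) → Ω → 𝒳 (j.1 + 1))
    (hX0 : Measurable X0)
    (hZ : ∀ j, Measurable (Z j))
    (hW : ∀ j b, Measurable (W j b))
    (hY : ∀ j w, Measurable (Y j w))
    (hX : ∀ j w, Measurable (X j w))
    -- observed variables, via consistency
    (Wobs : Fin (T + 1) → Ω → Bool)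
    (hWobs : ∀ j ω, Wobs j ω = W j (Z j ω) ω)
    (Yobs : Fin (T + 1) → Ω → ℝ)
    (hYobs : ∀ j ω, Yobs j ω = Y j (fun k => Wobs (Fin.castLE j.isLt k) ω) ω)
    (Xobs : (j : Fin (T + 1)) → Ω → 𝒳 (j.1 + 1))
    (hXobs : ∀ j ω, Xobs j ω = X j (fun k => Wobs (Fin.castLE j.isLt k) ω) ω)
    -- σ-algebra 𝒪 generated by X0 and all potential treatments and outcomes
    (mO : MeasurableSpace Ω)
    (hmO : mO = MeasurableSpace.comap X0 inferInstance
        ⊔ (⨆ j, ⨆ b, MeasurableSpace.comap (W j b) inferInstance)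
        ⊔ (⨆ j, ⨆ w, (MeasurableSpace.comap (Y j w) inferInstance
              ⊔ MeasurableSpace.comap (X j w) inferInstance)))
    -- observed history σ-algebras G_j = σ(O_0, …, O_j, Z_0, …, Z_{j-1})
    (G : Fin (T + 1) → MeasurableSpace Ω)
    (hGdef : ∀ j, G j = MeasurableSpace.comap X0 inferInstance
        ⊔ (⨆ k : Fin (T + 1), ⨆ _ : (k : ℕ) < (j : ℕ),
            (MeasurableSpace.comap (Yobs k) inferInstance
              ⊔ MeasurableSpace.comap (Xobs k) inferInstance
              ⊔ MeasurableSpace.comap (Z k) inferInstance)))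
    (hGle : ∀ j, G j ≤ mΩ)
    -- (SR) sequential randomization: Z_j ⟂ 𝒪 | G_j
    (hSR : ∀ j, CondIndep (G j) (MeasurableSpace.comap (Z j) inferInstance) mO (hGle j) μ)
    -- (POS) positivity: 0 < P(Z_j = 1 | G_j) < 1 a.s.
    (hPOS : ∀ j, ∀ᵐ ω ∂μ,
        0 < (μ[fun ω' => if Z j ω' = true then (1 : ℝ) else 0 | G j]) ω ∧
        (μ[fun ω' => if Z j ω' = true then (1 : ℝ) else 0 | G j]) ω < 1)
    -- (MON) monotonicity: P(W_j(1) ≥ W_j(0)) = 1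
    (hMON : ∀ j, μ {ω | W j false ω ≤ W j true ω} = 1)
    -- (CI) the pairs (W_j(0), W_j(1)) are mutually conditionally independent given σ(X_0)
    (hCI : iCondIndepFun (MeasurableSpace.comap X0 inferInstance) (hX0.comap_le)
        (fun j ω => (W j false ω, W j true ω)) μ) :
    μ[Set.indicator {ω | ∀ j, W j false ω < W j true ω} (fun _ => (1 : ℝ))
      | MeasurableSpace.comap X0 inferInstance]
    =ᵐ[μ]
    μ[fun ω => (∏ j, ((Wobs j ω).toNat : ℝ)) *
        ∑ i : Fin (T + 1) → Bool, ∏ j,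
          ((-1 : ℝ) ^ (1 - (i j).toNat) * (if Z j ω = i j then (1 : ℝ) else 0) /
            (μ[fun ω' => if Z j ω' = i j then (1 : ℝ) else 0 | G j]) ω)
      | MeasurableSpace.comap X0 inferInstance] :=
  theorem_4_2_general μ T 𝒳 X0 Z W Y X hX0 hZ hW Wobs hWobs Yobs Xobs mO hmO G hGdef hGle hSR hPOS
    hMON hCI
end

section
/- (Appendix A.1–A.2, non-complier identification.) Let (Ω, F, P) be a probability space and m ⊆ F a sub-σ-algebra. Let Z, W(0), W(1) : Ω → {0,1} be random variables, W = Z·W(1) + (1−Z)·W(0), and U an integrable real random variable. Assume Z is conditionally independent of the triple (W(0), W(1), U) given m, and 0 < P(Z = 1 | m) < 1 almost surely. Then, P-almost surely: E[ U·W·(1−Z) | m ] = E[ U · 1{W(0) = 1} | m ] · P(Z = 0 | m), and E[ U·(1−W)·Z | m ] = E[ U · 1{W(1) = 0} | m ] · P(Z = 1 | m). Consequently E[ U·W·(1−Z) | m ]/P(Z=0|m) identifies E[U·1{W(0)=1}|m] (the always-taker term) and E[ U·(1−W)·Z | m ]/P(Z=1|m) identifies E[U·1{W(1)=0}|m] (the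 never-taker term). -/
/-!
(Appendix A.1–A.2, non-complier identification.)  With `Z, W(0), W(1)` binary,
`W = Z·W(1) + (1−Z)·W(0)`, `U` integrable, `Z ⟂ (W(0), W(1), U) | m` and
`0 < P(Z = 1 | m) < 1` a.s., one has a.s.
`E[U·W·(1−Z) | m] = E[U·1{W(0)=1} | m] · P(Z=0 | m)` and
`E[U·(1−W)·Z | m] = E[U·1{W(1)=0} | m] · P(Z=1 | m)`, and consequently the
corresponding ratio identifications of the always-taker and never-taker terms.
-/

open MeasureTheory ProbabilityTheory

section Aux
variable {Ω : Type*} [mΩ : MeasurableSpace Ω] {μ : Measure Ω} {s t : Set Ω} {F G : Ω → ℝ}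

lemma auxIndInt (hs : MeasurableSet s) (h : Integrable F μ) : Integrable (s.indicator F) μ :=
  h.indicator hs

lemma auxIntegralIndicator (hs : MeasurableSet s) (F : Ω → ℝ) :
    ∫ x, s.indicator F x ∂μ = ∫ x in s, F x ∂μ := integral_indicator hs

lemma auxSetIntegralIndicator (ht : MeasurableSet t) (F : Ω → ℝ) :
    ∫ x in s, t.indicator F x ∂μ = ∫ x in s ∩ t, F x ∂μ := setIntegral_indicator ht

lemma auxSetIntegralCongr (hs : MeasurableSet s) (h : ∀ᵐ x ∂μ, x ∈ s → F x = G x) :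
    ∫ x in s, F x ∂μ = ∫ x in s, G x ∂μ := setIntegral_congr_ae hs h

lemma auxSetIntegralConst (c : ℝ) : ∫ _ in s, c ∂μ = (μ s).toReal * c := by
  rw [setIntegral_const, smul_eq_mul, measureReal_def]

lemma auxInterMeas (hs : MeasurableSet s) (ht : MeasurableSet t) : MeasurableSet (s ∩ t) :=
  hs.inter ht

lemma auxMulASM (hF : AEStronglyMeasurable F μ) (hG : AEStronglyMeasurable G μ) :
    AEStronglyMeasurable (fun x => F x * G x) μ := hF.mul hG

lemma auxContSetIntegral (s : Set Ω) :
    Continuous fun f : Ω →₁[μ] ℝ => ∫ x in s, f x ∂μ := continuous_setIntegral s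

lemma auxIntegrableOn (h : Integrable F μ) : IntegrableOn F s μ := h.integrableOn

end Aux

lemma auxCondexpL1coe {Ω : Type*} {m : MeasurableSpace Ω} [mΩ : MeasurableSpace Ω]
    (hm : m ≤ mΩ) (μ : Measure Ω) [IsProbabilityMeasure μ] (f : Ω →₁[μ] ℝ) :
    μ[(f : Ω → ℝ) | m] =ᵐ[μ] (condExpL1CLM ℝ hm μ f : Ω → ℝ) := by
  have h1 := condExp_ae_eq_condExpL1 (μ := μ) hm (f : Ω → ℝ)
  rwa [condExpL1_eq (L1.integrable_coeFn f), Integrable.toL1_coeFn] at h1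

lemma pullout_setIntegral {Ω : Type*} {mΩ : MeasurableSpace Ω}
    (μ : Measure Ω) [IsProbabilityMeasure μ]
    {m : MeasurableSpace Ω} (hm : m ≤ mΩ)
    {A s : Set Ω} (hA : MeasurableSet[mΩ] A) (hs : MeasurableSet[m] s)
    {F : Ω → ℝ} (hF : StronglyMeasurable[m] F) (hFi : Integrable F μ) :
    ∫ x in s ∩ A, F x ∂μ
      = ∫ x in s, F x * (μ[A.indicator (fun _ => (1:ℝ)) | m]) x ∂μ := by
  set f : Ω → ℝ := s.indicator F with hf_def
  set g : Ω → ℝ := A.indicator (fun _ => (1:ℝ)) with hg_def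
  have hfm : StronglyMeasurable[m] f := hF.indicator hs
  have hfi : Integrable f μ := auxIndInt (mΩ := mΩ) (hm s hs) hFi
  have hgi : Integrable g μ := auxIndInt (mΩ := mΩ) hA (integrable_const (1:ℝ))
  have hg_bdd : ∀ x, ‖g x‖ ≤ 1 := by
    intro x
    by_cases hx : x ∈ A <;> simp [hg_def, hx]
  have hfgi : Integrable (f * g) μ := by
    refine Integrable.mono hfi
      (auxMulASM (mΩ := mΩ) (hfm.mono hm).aestronglyMeasurable hgi.1) ?_
    refine Filter.Eventually.of_forall fun x => ?_
    calc ‖(f * g) x‖ = ‖f x‖ * ‖g x‖ := by simp [Pi.mul_apply, abs_mul]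
    _ ≤ ‖f x‖ * 1 := mul_le_mul_of_nonneg_left (hg_bdd x) (norm_nonneg _)
    _ = ‖f x‖ := mul_one _
  have hpull : μ[f * g|m] =ᵐ[μ] f * μ[g|m] :=
    condExp_mul_of_stronglyMeasurable_left hfm hfgi hgi
  have h1 : ∫ x in s ∩ A, F x ∂μ = ∫ x, (f * g) x ∂μ := by
    rw [← auxIntegralIndicator (mΩ := mΩ) (auxInterMeas (mΩ := mΩ) (hm s hs) hA) F]
    refine integral_congr_ae (Filter.Eventually.of_forall fun x => ?_)
    by_cases hx : x ∈ s <;> by_cases hx' : x ∈ A <;>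
      simp [hf_def, hg_def, Set.indicator_apply, hx, hx']
  have h2 : ∫ x, (f * g) x ∂μ = ∫ x, (μ[f * g|m]) x ∂μ :=
    (integral_condExp (f := f * g) hm).symm
  have h3 : ∫ x, (μ[f * g|m]) x ∂μ = ∫ x, f x * (μ[g|m]) x ∂μ :=
    integral_congr_ae hpull
  have h4 : ∫ x, f x * (μ[g|m]) x ∂μ = ∫ x in s, F x * (μ[g|m]) x ∂μ := by
    rw [← auxIntegralIndicator (mΩ := mΩ) (hm s hs) (fun x => F x * (μ[g|m]) x)]
    refine integral_congr_ae (Filter.Eventually.of_forall fun x => ?_)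
    by_cases hx : x ∈ s <;> simp [hf_def, Set.indicator_apply, hx]
  rw [h1, h2, h3, h4]

lemma key_factorize {Ω : Type*} {mΩ : MeasurableSpace Ω}
    (μ : Measure Ω) [IsProbabilityMeasure μ]
    {m mX : MeasurableSpace Ω} (hm : m ≤ mΩ) (hmX : mX ≤ mΩ)
    {A : Set Ω} (hA : MeasurableSet[mΩ] A)
    (hfac : ∀ ⦃t : Set Ω⦄, MeasurableSet[mX] t →
      (μ[(A ∩ t).indicator (fun _ => (1:ℝ)) | m]) =ᵐ[μ]
        fun ω => (μ[A.indicator (fun _ => (1:ℝ)) | m]) ω *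
          (μ[t.indicator (fun _ => (1:ℝ)) | m]) ω)
    {X : Ω → ℝ} (hX : StronglyMeasurable[mX] X) (hXi : Integrable X μ) :
    μ[fun ω => X ω * A.indicator (fun _ => (1:ℝ)) ω | m] =ᵐ[μ]
      fun ω => (μ[X | m]) ω * (μ[A.indicator (fun _ => (1:ℝ)) | m]) ω := by
  have hAi : Integrable (A.indicator (fun _ => (1:ℝ))) μ :=
    auxIndInt (mΩ := mΩ) hA (integrable_const (1:ℝ))
  have hp_bdd : ∀ᵐ x ∂μ, ‖(μ[A.indicator (fun _ => (1:ℝ)) | m]) x‖ ≤ 1 := by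
    have h0 : 0 ≤ᵐ[μ] μ[A.indicator (fun _ => (1:ℝ)) | m] :=
      condExp_nonneg (Filter.Eventually.of_forall fun x =>
        Set.indicator_nonneg (fun _ _ => zero_le_one) x)
    have h1 : μ[A.indicator (fun _ => (1:ℝ)) | m] ≤ᵐ[μ] μ[(fun _ => (1:ℝ)) | m] := by
      refine condExp_mono hAi (integrable_const (1:ℝ))
        (Filter.Eventually.of_forall fun x => ?_)
      by_cases hx : x ∈ A <;> simp [Set.indicator_apply, hx]
    have h2 : μ[(fun _ => (1:ℝ)) | m] = fun _ => (1:ℝ) := condExp_const hm (1:ℝ)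
    filter_upwards [h0, h1] with x hx0 hx1
    simp only [Pi.zero_apply] at hx0
    rw [h2] at hx1
    rw [Real.norm_eq_abs, abs_le]
    exact ⟨by linarith, hx1⟩
  set P : (Ω → ℝ) → Prop := fun f =>
    ∀ s : Set Ω, MeasurableSet[m] s →
      ∫ x in s ∩ A, f x ∂μ = ∫ x in s ∩ A, (μ[f | m]) x ∂μ with hP_def
  have main : ∀ ⦃f : Ω → ℝ⦄, MemLp f 1 μ → AEStronglyMeasurable[mX] f μ → P f := by
    refine MemLp.induction_stronglyMeasurable hmX ENNReal.one_ne_top P ?_ ?_ ?_ ?_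
    · -- indicator case
      intro c t hmt _ s hs
      have htΩ : MeasurableSet[mΩ] t := hmX t hmt
      have hsA : MeasurableSet[mΩ] (s ∩ A) := auxInterMeas (mΩ := mΩ) (hm s hs) hA
      have htind : Integrable (t.indicator (fun _ => (1:ℝ))) μ :=
        auxIndInt (mΩ := mΩ) htΩ (integrable_const (1:ℝ))
      have hAtind : Integrable ((A ∩ t).indicator (fun _ => (1:ℝ))) μ :=
        auxIndInt (mΩ := mΩ) (auxInterMeas (mΩ := mΩ) hA htΩ) (integrable_const (1:ℝ))
      have hLHS : ∫ x in s ∩ A, (t.indicator fun _ => c) x ∂μ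
          = (μ (s ∩ A ∩ t)).toReal * c := by
        rw [auxSetIntegralIndicator (mΩ := mΩ) htΩ (fun _ => c),
          auxSetIntegralConst (mΩ := mΩ) c]
      have hce : μ[t.indicator fun _ => c | m]
          =ᵐ[μ] fun x => c * (μ[t.indicator (fun _ => (1:ℝ)) | m]) x := by
        have hind : (t.indicator fun _ => c)
            = c • fun x => t.indicator (fun _ => (1:ℝ)) x := by
          funext x
          by_cases hx : x ∈ t <;> simp [Set.indicator_apply, hx]
        rw [hind]
        have hsm := condExp_smul (μ := μ) (m := m) c (fun x => t.indicator (fun _ => (1:ℝ)) x)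
        refine hsm.trans (Filter.Eventually.of_forall fun x => ?_)
        simp [smul_eq_mul]
      have step1 : ∫ x in s ∩ A, (μ[t.indicator fun _ => c | m]) x ∂μ
          = c * ∫ x in s ∩ A, (μ[t.indicator (fun _ => (1:ℝ)) | m]) x ∂μ := by
        rw [auxSetIntegralCongr (mΩ := mΩ) hsA (hce.mono fun x hx _ => hx)]
        exact integral_const_mul c _
      have step2 : ∫ x in s ∩ A, (μ[t.indicator (fun _ => (1:ℝ)) | m]) x ∂μ
          = ∫ x in s, (μ[t.indicator (fun _ => (1:ℝ)) | m]) x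
              * (μ[A.indicator (fun _ => (1:ℝ)) | m]) x ∂μ :=
        pullout_setIntegral μ hm hA hs stronglyMeasurable_condExp integrable_condExp
      have step3 : ∫ x in s, (μ[t.indicator (fun _ => (1:ℝ)) | m]) x
              * (μ[A.indicator (fun _ => (1:ℝ)) | m]) x ∂μ
          = ∫ x in s, (μ[(A ∩ t).indicator (fun _ => (1:ℝ)) | m]) x ∂μ := by
        refine auxSetIntegralCongr (mΩ := mΩ) (hm s hs) (((hfac hmt).mono ?_))
        intro x hx _
        rw [hx, mul_comm]
      have step4 : ∫ x in s, (μ[(A ∩ t).indicator (fun _ => (1:ℝ)) | m]) x ∂μ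
          = (μ (s ∩ (A ∩ t))).toReal := by
        rw [setIntegral_condExp hm hAtind hs,
          auxSetIntegralIndicator (mΩ := mΩ) (auxInterMeas (mΩ := mΩ) hA htΩ) (fun _ => (1:ℝ)),
          auxSetIntegralConst (mΩ := mΩ) (1:ℝ), mul_one]
      rw [hLHS, step1, step2, step3, step4, Set.inter_assoc]
      ring
    · -- additivity
      intro f g _ hfℒ hgℒ _ _ hPf hPg s hs
      have hfi : Integrable f μ := memLp_one_iff_integrable.mp hfℒ
      have hgi : Integrable g μ := memLp_one_iff_integrable.mp hgℒ
      have hL : ∫ x in s ∩ A, (f + g) x ∂μ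
          = ∫ x in s ∩ A, f x ∂μ + ∫ x in s ∩ A, g x ∂μ := by
        simp only [Pi.add_apply]
        exact integral_add (auxIntegrableOn (mΩ := mΩ) hfi) (auxIntegrableOn (mΩ := mΩ) hgi)
      have hR : ∫ x in s ∩ A, (μ[f + g | m]) x ∂μ
          = ∫ x in s ∩ A, (μ[f | m]) x ∂μ + ∫ x in s ∩ A, (μ[g | m]) x ∂μ := by
        have hsA : MeasurableSet[mΩ] (s ∩ A) := auxInterMeas (mΩ := mΩ) (hm s hs) hA
        rw [auxSetIntegralCongr (mΩ := mΩ) hsA ((condExp_add hfi hgi m).mono fun x hx _ => hx)]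
        simp only [Pi.add_apply]
        exact integral_add (auxIntegrableOn (mΩ := mΩ) integrable_condExp)
          (auxIntegrableOn (mΩ := mΩ) integrable_condExp)
      rw [hL, hR, hPf s hs, hPg s hs]
    · -- closedness
      have hcoe : ∀ f : Ω →₁[μ] ℝ, μ[(f : Ω → ℝ)|m] =ᵐ[μ] (condExpL1CLM ℝ hm μ f : Ω → ℝ) :=
        auxCondexpL1coe (mΩ := mΩ) hm μ
      have hset : {f : @lpMeas Ω ℝ ℝ _ _ _ mX mΩ 1 μ | P ↑f} =
          ⋂ (s : Set Ω), ⋂ (_ : MeasurableSet[m] s),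
            {f : @lpMeas Ω ℝ ℝ _ _ _ mX mΩ 1 μ |
              ∫ x in s ∩ A, ((f : Ω →₁[μ] ℝ) : Ω → ℝ) x ∂μ
                = ∫ x in s ∩ A, (condExpL1CLM ℝ hm μ (f : Ω →₁[μ] ℝ) : Ω → ℝ) x ∂μ} := by
        ext f
        simp only [Set.mem_iInter, Set.mem_setOf_eq]
        have hcongr : ∀ s : Set Ω, MeasurableSet[m] s →
            (∫ x in s ∩ A, (μ[((f : Ω →₁[μ] ℝ) : Ω → ℝ) | m]) x ∂μ
              = ∫ x in s ∩ A, (condExpL1CLM ℝ hm μ (f : Ω →₁[μ] ℝ) : Ω → ℝ) x ∂μ) := by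
          intro s hs
          refine auxSetIntegralCongr (mΩ := mΩ) (auxInterMeas (mΩ := mΩ) (hm s hs) hA)
            (((hcoe (f : Ω →₁[μ] ℝ)).mono fun x hx _ => hx))
        constructor
        · intro h s hs
          rw [← hcongr s hs]
          exact h s hs
        · intro h s hs
          rw [hcongr s hs]
          exact h s hs
      rw [hset]
      refine isClosed_iInter fun s => isClosed_iInter fun hs => isClosed_eq ?_ ?_
      · have heq : (fun f : @lpMeas Ω ℝ ℝ _ _ _ mX mΩ 1 μ =>
            ∫ x in s ∩ A, ((f : Ω →₁[μ] ℝ) : Ω → ℝ) x ∂μ)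
            = (fun g : Ω →₁[μ] ℝ => ∫ x in s ∩ A, g x ∂μ)
              ∘ (Submodule.subtypeL (@lpMeas Ω ℝ ℝ _ _ _ mX mΩ 1 μ)) := rfl
        rw [heq]
        exact (auxContSetIntegral (mΩ := mΩ) (s ∩ A)).comp
          (ContinuousLinearMap.continuous _)
      · have heq : (fun f : @lpMeas Ω ℝ ℝ _ _ _ mX mΩ 1 μ =>
            ∫ x in s ∩ A, (condExpL1CLM ℝ hm μ (f : Ω →₁[μ] ℝ) : Ω → ℝ) x ∂μ)
            = (fun g : Ω →₁[μ] ℝ => ∫ x in s ∩ A, g x ∂μ)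
              ∘ (condExpL1CLM ℝ hm μ) ∘ (Submodule.subtypeL (@lpMeas Ω ℝ ℝ _ _ _ mX mΩ 1 μ)) := rfl
        rw [heq]
        exact (auxContSetIntegral (mΩ := mΩ) (s ∩ A)).comp
          ((ContinuousLinearMap.continuous _).comp (ContinuousLinearMap.continuous _))
    · -- a.e. congruence
      intro f g hfg hfℒ hPf s hs
      have hsA : MeasurableSet[mΩ] (s ∩ A) := auxInterMeas (mΩ := mΩ) (hm s hs) hA
      have h1 : ∫ x in s ∩ A, g x ∂μ = ∫ x in s ∩ A, f x ∂μ :=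
        auxSetIntegralCongr (mΩ := mΩ) hsA (hfg.symm.mono fun x hx _ => hx)
      have h2 : ∫ x in s ∩ A, (μ[g | m]) x ∂μ = ∫ x in s ∩ A, (μ[f | m]) x ∂μ :=
        auxSetIntegralCongr (mΩ := mΩ) hsA ((condExp_congr_ae hfg.symm).mono fun x hx _ => hx)
      rw [h1, h2, hPf s hs]
  -- assemble
  have hXP : P X := main (memLp_one_iff_integrable.mpr hXi) hX.aestronglyMeasurable
  have hXAi : Integrable (fun ω => X ω * A.indicator (fun _ => (1:ℝ)) ω) μ := by
    refine Integrable.mono hXi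
      (auxMulASM (mΩ := mΩ) (hX.mono hmX).aestronglyMeasurable hAi.1) ?_
    refine Filter.Eventually.of_forall fun x => ?_
    have : ‖A.indicator (fun _ => (1:ℝ)) x‖ ≤ 1 := by
      by_cases hx : x ∈ A <;> simp [Set.indicator_apply, hx]
    calc ‖X x * A.indicator (fun _ => (1:ℝ)) x‖
        = ‖X x‖ * ‖A.indicator (fun _ => (1:ℝ)) x‖ := by rw [norm_mul]
    _ ≤ ‖X x‖ * 1 := mul_le_mul_of_nonneg_left this (norm_nonneg _)
    _ = ‖X x‖ := mul_one _
  refine (ae_eq_condExp_of_forall_setIntegral_eq hm hXAi ?_ ?_ ?_).symm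
  · intro s _ _
    have : Integrable (fun x => (μ[A.indicator (fun _ => (1:ℝ)) | m]) x * (μ[X | m]) x) μ :=
      Integrable.bdd_mul integrable_condExp
        (stronglyMeasurable_condExp.mono hm).aestronglyMeasurable hp_bdd
    have h2 : Integrable (fun x => (μ[X | m]) x * (μ[A.indicator (fun _ => (1:ℝ)) | m]) x) μ := by
      refine this.congr (Filter.Eventually.of_forall fun x => ?_)
      ring
    exact auxIntegrableOn (mΩ := mΩ) h2
  · intro s hs _
    have e1 : ∫ x in s, (μ[X | m]) x * (μ[A.indicator (fun _ => (1:ℝ)) | m]) x ∂μ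
        = ∫ x in s ∩ A, (μ[X | m]) x ∂μ :=
      (pullout_setIntegral μ hm hA hs stronglyMeasurable_condExp integrable_condExp).symm
    have e2 : ∫ x in s ∩ A, (μ[X | m]) x ∂μ = ∫ x in s ∩ A, X x ∂μ := (hXP s hs).symm
    have e3 : ∫ x in s ∩ A, X x ∂μ = ∫ x in s, X x * A.indicator (fun _ => (1:ℝ)) x ∂μ := by
      rw [← auxSetIntegralIndicator (mΩ := mΩ) hA X]
      refine auxSetIntegralCongr (mΩ := mΩ) (hm s hs)
        (Filter.Eventually.of_forall fun x _ => ?_)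
      by_cases hx : x ∈ A <;> simp [Set.indicator_apply, hx]
    rw [e1, e2, e3]
  · exact (stronglyMeasurable_condExp.mul stronglyMeasurable_condExp).aestronglyMeasurable

theorem appendix_noncomplier_identification
    {Ω : Type*} {m : MeasurableSpace Ω} {mΩ : MeasurableSpace Ω} [StandardBorelSpace Ω] [Nonempty Ω]
    (μ : Measure Ω) [IsProbabilityMeasure μ]
    (hm : m ≤ mΩ)
    (Z W0 W1 : Ω → Bool) (U : Ω → ℝ)
    (hZ : Measurable Z) (hW0 : Measurable W0) (hW1 : Measurable W1)
    (hU : Measurable U) (hUi : Integrable U μ)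
    (W : Ω → Bool) (hWcons : ∀ ω, W ω = if Z ω then W1 ω else W0 ω)
    -- Z conditionally independent of (W(0), W(1), U) given m
    (hCI : CondIndepFun m hm Z (fun ω => (W0 ω, W1 ω, U ω)) μ)
    -- positivity: 0 < P(Z = 1 | m) < 1 a.s.
    (hPOS : ∀ᵐ ω ∂μ,
        0 < (μ[fun ω' => if Z ω' = true then (1 : ℝ) else 0 | m]) ω ∧
        (μ[fun ω' => if Z ω' = true then (1 : ℝ) else 0 | m]) ω < 1) :
    -- always-taker identity
    (μ[fun ω => U ω * ((W ω).toNat : ℝ) * (1 - ((Z ω).toNat : ℝ)) | m]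
      =ᵐ[μ]
      fun ω => (μ[fun ω' => U ω' * ((W0 ω').toNat : ℝ) | m]) ω *
        (μ[fun ω' => if Z ω' = false then (1 : ℝ) else 0 | m]) ω) ∧
    -- never-taker identity
    (μ[fun ω => U ω * (1 - ((W ω).toNat : ℝ)) * ((Z ω).toNat : ℝ) | m]
      =ᵐ[μ]
      fun ω => (μ[fun ω' => U ω' * (1 - ((W1 ω').toNat : ℝ)) | m]) ω *
        (μ[fun ω' => if Z ω' = true then (1 : ℝ) else 0 | m]) ω) ∧
    -- consequently: ratio identification of the always-taker term
    ((fun ω => (μ[fun ω' => U ω' * ((W ω').toNat : ℝ) * (1 - ((Z ω').toNat : ℝ)) | m]) ω /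
        (μ[fun ω' => if Z ω' = false then (1 : ℝ) else 0 | m]) ω)
      =ᵐ[μ] μ[fun ω => U ω * ((W0 ω).toNat : ℝ) | m]) ∧
    -- consequently: ratio identification of the never-taker term
    ((fun ω => (μ[fun ω' => U ω' * (1 - ((W ω').toNat : ℝ)) * ((Z ω').toNat : ℝ) | m]) ω /
        (μ[fun ω' => if Z ω' = true then (1 : ℝ) else 0 | m]) ω)
      =ᵐ[μ] μ[fun ω => U ω * (1 - ((W1 ω).toNat : ℝ)) | m]) := by
  have hZ' : Measurable[mΩ] Z := hZ
  have hW0' : Measurable[mΩ] W0 := hW0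
  have hW1' : Measurable[mΩ] W1 := hW1
  have hU' : Measurable[mΩ] U := hU
  -- the joint variable
  set V : Ω → Bool × Bool × ℝ := fun ω => (W0 ω, W1 ω, U ω) with hV_def
  have hV : Measurable[mΩ] V := hW0'.prodMk (hW1'.prodMk hU')
  have hbase := (condIndepFun_iff_condExp_inter_preimage_eq_mul (μ := μ) (hm' := hm) hZ' hV).mp hCI
  set mX : MeasurableSpace Ω := MeasurableSpace.comap V inferInstance with hmX_def
  have hmX : mX ≤ mΩ := by
    intro s hs
    rcases hs with ⟨t', ht', rfl⟩
    exact hV ht'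
  have hVmX : Measurable[mX] V := Measurable.of_comap_le le_rfl
  have hfacgen : ∀ (b : Bool) ⦃t : Set Ω⦄, MeasurableSet[mX] t →
      (μ[((Z ⁻¹' {b}) ∩ t).indicator (fun _ => (1:ℝ)) | m]) =ᵐ[μ]
        fun ω => (μ[(Z ⁻¹' {b}).indicator (fun _ => (1:ℝ)) | m]) ω *
          (μ[t.indicator (fun _ => (1:ℝ)) | m]) ω := by
    intro b t ht
    rcases ht with ⟨t', ht', rfl⟩
    exact hbase {b} t' (measurableSet_singleton b) ht'
  -- always-taker integrand
  set X0 : Ω → ℝ := fun ω => U ω * ((W0 ω).toNat : ℝ) with hX0_def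
  set X1 : Ω → ℝ := fun ω => U ω * (1 - ((W1 ω).toNat : ℝ)) with hX1_def
  have hg0 : Measurable fun p : Bool × Bool × ℝ => p.2.2 * ((p.1.toNat : ℕ) : ℝ) :=
    (measurable_snd.snd).mul
      ((Measurable.of_discrete (f := fun b : Bool => ((b.toNat : ℕ) : ℝ))).comp measurable_fst)
  have hg1 : Measurable fun p : Bool × Bool × ℝ => p.2.2 * (1 - ((p.2.1.toNat : ℕ) : ℝ)) :=
    (measurable_snd.snd).mul
      ((Measurable.of_discrete (f := fun b : Bool => 1 - ((b.toNat : ℕ) : ℝ))).comp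
        measurable_snd.fst)
  have hX0m : StronglyMeasurable[mX] X0 := (hg0.comp hVmX).stronglyMeasurable
  have hX1m : StronglyMeasurable[mX] X1 := (hg1.comp hVmX).stronglyMeasurable
  have hX0i : Integrable X0 μ := by
    refine Integrable.mono hUi ((hg0.comp hV).aestronglyMeasurable) ?_
    refine Filter.Eventually.of_forall fun ω => ?_
    rw [Real.norm_eq_abs, Real.norm_eq_abs, abs_mul]
    have : |((W0 ω).toNat : ℝ)| ≤ 1 := by cases h : W0 ω <;> simp [h]
    calc |U ω| * |((W0 ω).toNat : ℝ)| ≤ |U ω| * 1 :=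
      mul_le_mul_of_nonneg_left this (abs_nonneg _)
    _ = |U ω| := mul_one _
  have hX1i : Integrable X1 μ := by
    refine Integrable.mono hUi ((hg1.comp hV).aestronglyMeasurable) ?_
    refine Filter.Eventually.of_forall fun ω => ?_
    rw [Real.norm_eq_abs, Real.norm_eq_abs, abs_mul]
    have : |(1 - ((W1 ω).toNat : ℝ))| ≤ 1 := by cases h : W1 ω <;> simp [h]
    calc |U ω| * |(1 - ((W1 ω).toNat : ℝ))| ≤ |U ω| * 1 :=
      mul_le_mul_of_nonneg_left this (abs_nonneg _)
    _ = |U ω| := mul_one _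
  have hA0 : MeasurableSet[mΩ] (Z ⁻¹' {false}) := hZ' (measurableSet_singleton false)
  have hA1 : MeasurableSet[mΩ] (Z ⁻¹' {true}) := hZ' (measurableSet_singleton true)
  -- indicator = if forms
  have hind0 : (Z ⁻¹' {false}).indicator (fun _ => (1:ℝ))
      = fun ω => if Z ω = false then (1:ℝ) else 0 := by
    funext ω
    by_cases h : Z ω = false <;> simp [Set.indicator_apply, h]
  have hind1 : (Z ⁻¹' {true}).indicator (fun _ => (1:ℝ))
      = fun ω => if Z ω = true then (1:ℝ) else 0 := by
    funext ω
    by_cases h : Z ω = true <;> simp [Set.indicator_apply, h]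
  -- identity 1
  have key0 := key_factorize μ hm hmX hA0 (hfacgen false) hX0m hX0i
  have key1 := key_factorize μ hm hmX hA1 (hfacgen true) hX1m hX1i
  have e0 : (fun ω => U ω * ((W ω).toNat : ℝ) * (1 - ((Z ω).toNat : ℝ)))
      = fun ω => X0 ω * (Z ⁻¹' {false}).indicator (fun _ => (1:ℝ)) ω := by
    funext ω
    rw [hWcons ω]
    cases h : Z ω <;> simp [hX0_def, Set.indicator_apply, h]
  have e1 : (fun ω => U ω * (1 - ((W ω).toNat : ℝ)) * ((Z ω).toNat : ℝ))
      = fun ω => X1 ω * (Z ⁻¹' {true}).indicator (fun _ => (1:ℝ)) ω := by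
    funext ω
    rw [hWcons ω]
    cases h : Z ω <;> simp [hX1_def, Set.indicator_apply, h]
  have id0 : μ[fun ω => U ω * ((W ω).toNat : ℝ) * (1 - ((Z ω).toNat : ℝ)) | m]
      =ᵐ[μ]
      fun ω => (μ[fun ω' => U ω' * ((W0 ω').toNat : ℝ) | m]) ω *
        (μ[fun ω' => if Z ω' = false then (1 : ℝ) else 0 | m]) ω := by
    rw [e0, ← hind0]
    exact key0
  have id1 : μ[fun ω => U ω * (1 - ((W ω).toNat : ℝ)) * ((Z ω).toNat : ℝ) | m]
      =ᵐ[μ]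
      fun ω => (μ[fun ω' => U ω' * (1 - ((W1 ω').toNat : ℝ)) | m]) ω *
        (μ[fun ω' => if Z ω' = true then (1 : ℝ) else 0 | m]) ω := by
    rw [e1, ← hind1]
    exact key1
  -- positivity transfers
  have hq0 : (μ[fun ω' => if Z ω' = false then (1:ℝ) else 0 | m])
      =ᵐ[μ] fun ω => 1 - (μ[fun ω' => if Z ω' = true then (1:ℝ) else 0 | m]) ω := by
    have hfun : (fun ω' => if Z ω' = false then (1:ℝ) else 0)
        = (fun _ => (1:ℝ)) - (fun ω' => if Z ω' = true then (1:ℝ) else 0) := by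
      funext ω
      cases h : Z ω <;> simp [h]
    rw [hfun]
    have hZi : Integrable (fun ω' => if Z ω' = true then (1:ℝ) else 0) μ := by
      rw [← hind1]
      exact auxIndInt (mΩ := mΩ) hA1 (integrable_const (1:ℝ))
    refine (condExp_sub (integrable_const (1:ℝ)) hZi m).trans ?_
    rw [condExp_const hm (1:ℝ)]
    exact Filter.Eventually.of_forall fun x => by simp [Pi.sub_apply]
  refine ⟨id0, id1, ?_, ?_⟩
  · filter_upwards [id0, hq0, hPOS] with ω h1 h2 h3
    have hne : (μ[fun ω' => if Z ω' = false then (1:ℝ) else 0 | m]) ω ≠ 0 := by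
      rw [h2]
      have := h3.2
      linarith
    rw [h1, mul_div_assoc, div_self hne, mul_one]
  · filter_upwards [id1, hPOS] with ω h1 h3
    have hne : (μ[fun ω' => if Z ω' = true then (1:ℝ) else 0 | m]) ω ≠ 0 :=
      ne_of_gt h3.1
    rw [h1, mul_div_assoc, div_self hne, mul_one]
end
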